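/- Let H be a real Hilbert space (a complete real inner product space) and let D, L : H →L[ℝ] H be bounded self-adjoint operators such that L ∘ L = id and D ∘ L = -(L ∘ D). Then for every real number τ ≠ 0 the bounded operator D - (τ/2) • L is bijective. -/

import Mathlib

/-!
Since `L² = 1` and `D` anticommutes with `L`, the cross terms cancel in
`(D - c • L)² = D² + c²`. For `c ≠ 0` this square is coercive, as `⟪D² x, x⟫ = ‖D x‖² ≥ 0`,
so it is bijective by Lax–Milgram, and then so is `D - c • L`.
-/

open scoped RealInnerProductSpace

theorem Function.Bijective.of_comp_self {α : Type*} {f : α → α}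
    (hf : Function.Bijective (f ∘ f)) : Function.Bijective f :=
  ⟨hf.injective.of_comp, hf.surjective.of_comp⟩

theorem mul_self_sub_smul_eq_of_anticomm {R A : Type*} [CommRing R] [Ring A] [Algebra R A]
    {D L : A} (hL : L * L = 1) (hDL : D * L = -(L * D)) (c : R) :
    (D - c • L) * (D - c • L) = D * D + c ^ 2 • 1 := by
  simp only [sub_mul, mul_sub, smul_mul_assoc, mul_smul_comm, hL, hDL]
  module

section

variable {H : Type*} [NormedAddCommGroup H] [InnerProductSpace ℝ H] [CompleteSpace H]

theorem ContinuousLinearMap.bijective_of_coercive {T : H →L[ℝ] H} {C : ℝ} (hC : 0 < C)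
    (hT : ∀ x, C * ‖x‖ * ‖x‖ ≤ ⟪T x, x⟫) : Function.Bijective T := by
  have coercive : IsCoercive ((innerSL ℝ).comp T) := ⟨C, hC, hT⟩
  convert coercive.continuousLinearEquivOfBilin.bijective
  ext x
  exact coercive.unique_continuousLinearEquivOfBilin fun _ ↦ rfl

theorem ContinuousLinearMap.bijective_mul_self_add_smul_one {D : H →L[ℝ] H}
    (hD : ∀ x y, ⟪D x, y⟫ = ⟪x, D y⟫) {c : ℝ} (hc : 0 < c) :
    Function.Bijective (D * D + c • (1 : H →L[ℝ] H)) := by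
  refine ContinuousLinearMap.bijective_of_coercive hc fun x ↦ ?_
  calc c * ‖x‖ * ‖x‖ ≤ ⟪D x, D x⟫ + c * ‖x‖ * ‖x‖ := le_add_of_nonneg_left real_inner_self_nonneg
    _ = ⟪D (D x), x⟫ + c * ⟪x, x⟫ := by
      rw [hD (D x) x, mul_assoc, ← real_inner_self_eq_norm_mul_norm]
    _ = ⟪(D * D + c • (1 : H →L[ℝ] H)) x, x⟫ := by
      simp only [add_apply, mul_apply_eq_comp, smul_apply, one_apply_eq_self, inner_add_left,
        real_inner_smul_left]

end

theorem diracWitten_bijective_general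
    {H : Type*} [NormedAddCommGroup H] [InnerProductSpace ℝ H] [CompleteSpace H]
    (D L : H →L[ℝ] H)
    (hD : ∀ x y : H, ⟪D x, y⟫ = ⟪x, D y⟫)
    (hL2 : L.comp L = ContinuousLinearMap.id ℝ H)
    (hanti : D.comp L = -(L.comp D))
    (τ : ℝ) (hτ : τ ≠ 0) :
    Function.Bijective (D - (τ / 2) • L) := by
  have hsq : (D - (τ / 2) • L) * (D - (τ / 2) • L) = D * D + (τ / 2) ^ 2 • 1 :=
    mul_self_sub_smul_eq_of_anticomm hL2 hanti (τ / 2)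
  refine Function.Bijective.of_comp_self ?_
  rw [← FunLike.coe_mul_eq_comp, hsq]
  exact ContinuousLinearMap.bijective_mul_self_add_smul_one hD (by positivity)

/-- If `D` and `L` are bounded self-adjoint operators on a real Hilbert space with
`L ∘ L = id` and `D ∘ L = -(L ∘ D)`, then `D - (τ/2) • L` is bijective for every `τ ≠ 0`. -/
theorem diracWitten_bijective
    {H : Type*} [NormedAddCommGroup H] [InnerProductSpace ℝ H] [CompleteSpace H]
    (D L : H →L[ℝ] H)
    (hD : ∀ x y : H, ⟪D x, y⟫ = ⟪x, D y⟫)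
    (hL : ∀ x y : H, ⟪L x, y⟫ = ⟪x, L y⟫)
    (hL2 : L.comp L = ContinuousLinearMap.id ℝ H)
    (hanti : D.comp L = -(L.comp D))
    (τ : ℝ) (hτ : τ ≠ 0) :
    Function.Bijective (D - (τ / 2) • L) :=
  diracWitten_bijective_general D L hD hL2 hanti τ hτ
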